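/- arXiv:2001.04929 — 10 statements merged into one kernel-verified Lean document; each statement's English description precedes it below -/
import Mathlib

section
/- For every n ≥ 1, every field k and every unit v ∈ kˣ, the trigonometric R-matrix satisfies the Yang–Baxter equation with spectral parameters: R_trig;12(u,v') · R_trig;13(u,w) · R_trig;23(v',w) = R_trig;23(v',w) · R_trig;13(u,w) · R_trig;12(u,v'), as an identity of n³×n³ matrices with entries in the polynomial ring k[u,v',w]. -/
open Matrix MvPolynomial

noncomputable section

/-- The trigonometric R-matrix
`R_trig(z,w) = (vz − v⁻¹w)·∑ᵢ Eᵢᵢ⊗Eᵢᵢ + (z−w)·∑_{i≠j} Eᵢᵢ⊗Eⱼⱼ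
  + (v−v⁻¹)z·∑_{i<j} Eᵢⱼ⊗Eⱼᵢ + (v−v⁻¹)w·∑_{i>j} Eᵢⱼ⊗Eⱼᵢ`. -/
def Rtrig (n : ℕ) {k : Type*} [Field k] {A : Type*} [Ring A] [Algebra k A]
    (v : kˣ) (z w : A) : Matrix (Fin n × Fin n) (Fin n × Fin n) A :=
  Matrix.of fun x y =>
    (if x = y then
      (if x.1 = x.2 then algebraMap k A (v : k) * z - algebraMap k A ((v⁻¹ : kˣ) : k) * w
       else z - w)
     else 0) +
    (if x.1 = y.2 ∧ x.2 = y.1 ∧ x.1 ≠ x.2 then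
      (algebraMap k A (v : k) - algebraMap k A ((v⁻¹ : kˣ) : k)) *
        (if x.1 < x.2 then z else w)
     else 0)

/-- `S₁₂ = S ⊗ Id_n`. -/
def emb12 (n : ℕ) {R : Type*} [Ring R]
    (S : Matrix (Fin n × Fin n) (Fin n × Fin n) R) :
    Matrix (Fin n × Fin n × Fin n) (Fin n × Fin n × Fin n) R :=
  Matrix.of fun x y => S (x.1, x.2.1) (y.1, y.2.1) * (if x.2.2 = y.2.2 then 1 else 0)

/-- `S₁₃`: `(S₁₃)_{(i,j,k),(i',j',k')} = S_{(i,k),(i',k')} δ_{j,j'}`. -/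
def emb13 (n : ℕ) {R : Type*} [Ring R]
    (S : Matrix (Fin n × Fin n) (Fin n × Fin n) R) :
    Matrix (Fin n × Fin n × Fin n) (Fin n × Fin n × Fin n) R :=
  Matrix.of fun x y => S (x.1, x.2.2) (y.1, y.2.2) * (if x.2.1 = y.2.1 then 1 else 0)

/-- `S₂₃ = Id_n ⊗ S`. -/
def emb23 (n : ℕ) {R : Type*} [Ring R]
    (S : Matrix (Fin n × Fin n) (Fin n × Fin n) R) :
    Matrix (Fin n × Fin n × Fin n) (Fin n × Fin n × Fin n) R :=
  Matrix.of fun x y => (if x.1 = y.1 then 1 else 0) * S (x.2.1, x.2.2) (y.2.1, y.2.2)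

/-!
Each of `R₁₂`, `R₁₃`, `R₂₃` sends the basis vector indexed by `(i, j, k)` to a combination of
itself and the basis vector with the two affected indices swapped, with coefficients that depend
only on whether those indices are equal, increasing or decreasing. Hence both sides of the
Yang–Baxter equation, applied to a vector `f` and read at `(i, j, k)`, are combinations of the
values of `f` at the permutations of `(i, j, k)`, and their equality depends only on the relative
order of `i, j, k`: one polynomial identity in `x, y, z, v, v⁻¹` for each of the 13 order types.
-/

section Coefficients

variable {R ι : Type*} [LinearOrder ι]

section Ring

variable [Ring R]

def trigDiagCoeff (a b z w : R) (i j : ι) : R :=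
  if i = j then a * z - b * w else z - w

def trigSwapCoeff (a b z w : R) (i j : ι) : R :=
  if i = j then 0 else (a - b) * if i < j then z else w

end Ring

variable [CommRing R]

theorem trigDiagCoeff_self (a b z w : R) (i : ι) : trigDiagCoeff a b z w i i = a * z - b * w :=
  if_pos rfl

theorem trigDiagCoeff_of_lt (a b z w : R) {i j : ι} (h : i < j) :
    trigDiagCoeff a b z w i j = z - w :=
  if_neg h.ne

theorem trigDiagCoeff_of_gt (a b z w : R) {i j : ι} (h : j < i) :
    trigDiagCoeff a b z w i j = z - w :=
  if_neg h.ne'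

theorem trigSwapCoeff_self (a b z w : R) (i : ι) : trigSwapCoeff a b z w i i = 0 :=
  if_pos rfl

theorem trigSwapCoeff_of_lt (a b z w : R) {i j : ι} (h : i < j) :
    trigSwapCoeff a b z w i j = (a - b) * z := by
  rw [trigSwapCoeff, if_neg h.ne, if_pos h]

theorem trigSwapCoeff_of_gt (a b z w : R) {i j : ι} (h : j < i) :
    trigSwapCoeff a b z w i j = (a - b) * w := by
  rw [trigSwapCoeff, if_neg h.ne', if_neg h.not_gt]

/- The identity is a ring identity except when `i = j ≠ k` or `i ≠ j = k`; there `a * b = 1`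
is needed. -/
theorem trigCoeff_yangBaxter {a b : R} (hab : a * b = 1) (x y z : R) (i j k : ι)
    (f : ι → ι → ι → R) :
    trigDiagCoeff a b x y i j *
        (trigDiagCoeff a b x z i k *
            (trigDiagCoeff a b y z j k * f i j k + trigSwapCoeff a b y z j k * f i k j) +
          trigSwapCoeff a b x z i k *
            (trigDiagCoeff a b y z j i * f k j i + trigSwapCoeff a b y z j i * f k i j)) +
      trigSwapCoeff a b x y i j *
        (trigDiagCoeff a b x z j k *
            (trigDiagCoeff a b y z i k * f j i k + trigSwapCoeff a b y z i k * f j k i) +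
          trigSwapCoeff a b x z j k *
            (trigDiagCoeff a b y z i j * f k i j + trigSwapCoeff a b y z i j * f k j i)) =
    trigDiagCoeff a b y z j k *
        (trigDiagCoeff a b x z i k *
            (trigDiagCoeff a b x y i j * f i j k + trigSwapCoeff a b x y i j * f j i k) +
          trigSwapCoeff a b x z i k *
            (trigDiagCoeff a b x y k j * f k j i + trigSwapCoeff a b x y k j * f j k i)) +
      trigSwapCoeff a b y z j k *
        (trigDiagCoeff a b x z i j *
            (trigDiagCoeff a b x y i k * f i k j + trigSwapCoeff a b x y i k * f k i j) +
          trigSwapCoeff a b x z i j *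
            (trigDiagCoeff a b x y j k * f j k i + trigSwapCoeff a b x y j k * f k j i)) := by
  rcases lt_trichotomy i j with hij | hij | hij <;>
    rcases lt_trichotomy i k with hik | hik | hik <;>
      rcases lt_trichotomy j k with hjk | hjk | hjk <;>
        subst_vars <;> try (exfalso; order)
  all_goals
    simp (disch := assumption) only [trigDiagCoeff_self, trigDiagCoeff_of_lt, trigDiagCoeff_of_gt,
      trigSwapCoeff_self, trigSwapCoeff_of_lt, trigSwapCoeff_of_gt]
    first | ring1 | grind

end Coefficients

section Embeddings

variable {n : ℕ} {R : Type*} [Ring R] (S : Matrix (Fin n × Fin n) (Fin n × Fin n) R)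
  (f : Fin n × Fin n × Fin n → R) (i j k : Fin n)

theorem emb12_mulVec : (emb12 n S *ᵥ f) (i, j, k) = (S *ᵥ fun x => f (x.1, x.2, k)) (i, j) := by
  simp [mulVec, dotProduct, emb12, Fintype.sum_prod_type]

theorem emb13_mulVec : (emb13 n S *ᵥ f) (i, j, k) = (S *ᵥ fun x => f (x.1, j, x.2)) (i, k) := by
  simp [mulVec, dotProduct, emb13, Fintype.sum_prod_type]

theorem emb23_mulVec : (emb23 n S *ᵥ f) (i, j, k) = (S *ᵥ fun x => f (i, x.1, x.2)) (j, k) := by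
  simp [mulVec, dotProduct, emb23, Fintype.sum_prod_type]

end Embeddings

section Rtrig

variable {n : ℕ} {k A : Type*} [Field k] [Ring A] [Algebra k A] (v : kˣ) (z w : A)

theorem Rtrig_apply (x y : Fin n × Fin n) :
    Rtrig n v z w x y =
      (if x = y then trigDiagCoeff (algebraMap k A v) (algebraMap k A ↑v⁻¹) z w x.1 x.2 else 0) +
        if x.swap = y then trigSwapCoeff (algebraMap k A v) (algebraMap k A ↑v⁻¹) z w x.1 x.2
        else 0 := by
  obtain ⟨i, j⟩ := x
  obtain ⟨i', j'⟩ := y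
  simp only [Rtrig, trigDiagCoeff, trigSwapCoeff, of_apply, Prod.swap_prod_mk, Prod.mk.injEq]
  split_ifs <;> grind

theorem Rtrig_mulVec (f : Fin n × Fin n → A) (i j : Fin n) :
    (Rtrig n v z w *ᵥ f) (i, j) =
      trigDiagCoeff (algebraMap k A v) (algebraMap k A ↑v⁻¹) z w i j * f (i, j) +
        trigSwapCoeff (algebraMap k A v) (algebraMap k A ↑v⁻¹) z w i j * f (j, i) := by
  simp [mulVec, dotProduct, Rtrig_apply, add_mul, Finset.sum_add_distrib]

end Rtrig

theorem Rtrig_yangBaxter {k A : Type*} [Field k] [CommRing A] [Algebra k A] (n : ℕ) (v : kˣ)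
    (x y z : A) :
    emb12 n (Rtrig n v x y) * emb13 n (Rtrig n v x z) * emb23 n (Rtrig n v y z) =
      emb23 n (Rtrig n v y z) * emb13 n (Rtrig n v x z) * emb12 n (Rtrig n v x y) := by
  have hab : algebraMap k A v * algebraMap k A ↑v⁻¹ = 1 := by
    rw [← map_mul, Units.mul_inv, map_one]
  refine Matrix.ext_iff_mulVec.mpr fun f => funext fun ⟨i, j, l⟩ => ?_
  simp only [← mulVec_mulVec, emb12_mulVec, emb13_mulVec, emb23_mulVec, Rtrig_mulVec]
  exact trigCoeff_yangBaxter hab x y z i j l fun i j l => f (i, j, l)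

theorem trigonometric_yang_baxter_general (n : ℕ) (k : Type*) [Field k] (v : kˣ) :
    emb12 n (Rtrig n v (X 0 : MvPolynomial (Fin 3) k) (X 1)) *
        emb13 n (Rtrig n v (X 0 : MvPolynomial (Fin 3) k) (X 2)) *
          emb23 n (Rtrig n v (X 1 : MvPolynomial (Fin 3) k) (X 2)) =
      emb23 n (Rtrig n v (X 1 : MvPolynomial (Fin 3) k) (X 2)) *
        emb13 n (Rtrig n v (X 0 : MvPolynomial (Fin 3) k) (X 2)) *
          emb12 n (Rtrig n v (X 0 : MvPolynomial (Fin 3) k) (X 1)) :=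
  Rtrig_yangBaxter n v _ _ _

/-- The trigonometric R-matrix satisfies the Yang–Baxter equation with spectral parameters
`R₁₂(u,v')·R₁₃(u,w)·R₂₃(v',w) = R₂₃(v',w)·R₁₃(u,w)·R₁₂(u,v')`, as an identity of `n³×n³`
matrices with entries in the polynomial ring `k[u,v',w]`. -/
theorem trigonometric_yang_baxter (n : ℕ) (hn : 1 ≤ n) (k : Type*) [Field k] (v : kˣ) :
    emb12 n (Rtrig n v (X 0 : MvPolynomial (Fin 3) k) (X 1)) *
        emb13 n (Rtrig n v (X 0 : MvPolynomial (Fin 3) k) (X 2)) *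
          emb23 n (Rtrig n v (X 1 : MvPolynomial (Fin 3) k) (X 2)) =
      emb23 n (Rtrig n v (X 1 : MvPolynomial (Fin 3) k) (X 2)) *
        emb13 n (Rtrig n v (X 0 : MvPolynomial (Fin 3) k) (X 2)) *
          emb12 n (Rtrig n v (X 0 : MvPolynomial (Fin 3) k) (X 1)) :=
  trigonometric_yang_baxter_general n k v
end
end

section
/- Let n ≥ 1, k a field, v ∈ kˣ a unit, D an associative unital k-algebra, and T⁺, T⁻ two n×n matrices with entries in D. Then the matrix T(z) := z·T⁺ − T⁻ satisfies the trigonometric RTT relation R_trig(z,w)·T₁(z)·T₂(w) = T₂(w)·T₁(z)·R_trig(z,w) (an identity of n²×n² matrices with entries in the polynomial ring D[z,w]) if and only if the following three finite RTT relations hold: R·T⁺₁·T⁺₂ = T⁺₂·T⁺₁·R, R·T⁻₁·T⁻₂ = T⁻₂·T⁻₁·R, and R·T⁻₁·T⁺₂ = T⁺₂·T⁻₁·R, where for an n×n matrix X we set X₁ := X⊗Id_n and X₂ := Id_n⊗X. -/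
open Matrix Polynomial

noncomputable section

/-- The finite trigonometric R-matrix
`R = v⁻¹·∑ᵢ Eᵢᵢ⊗Eᵢᵢ + ∑_{i≠j} Eᵢᵢ⊗Eⱼⱼ + (v⁻¹−v)·∑_{i>j} Eᵢⱼ⊗Eⱼᵢ`
with entries in a `k`-algebra `A`. -/
def Rfin (n : ℕ) {k : Type*} [Field k] {A : Type*} [Ring A] [Algebra k A] (v : kˣ) :
    Matrix (Fin n × Fin n) (Fin n × Fin n) A :=
  Matrix.of fun x y =>
    (if x = y then (if x.1 = x.2 then algebraMap k A ((v⁻¹ : kˣ) : k) else 1) else 0) +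
    (if x.1 = y.2 ∧ x.2 = y.1 ∧ x.2 < x.1 then
      algebraMap k A ((v⁻¹ : kˣ) : k) - algebraMap k A (v : k)
     else 0)

/-- `X₁ = X ⊗ Id_n`. -/
def kron1 {n : ℕ} {R : Type*} [Ring R] (X : Matrix (Fin n) (Fin n) R) :
    Matrix (Fin n × Fin n) (Fin n × Fin n) R :=
  Matrix.of fun x y => X x.1 y.1 * (if x.2 = y.2 then 1 else 0)

/-- `X₂ = Id_n ⊗ X`. -/
def kron2 {n : ℕ} {R : Type*} [Ring R] (X : Matrix (Fin n) (Fin n) R) :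
    Matrix (Fin n × Fin n) (Fin n × Fin n) R :=
  Matrix.of fun x y => (if x.1 = y.1 then 1 else 0) * X x.2 y.2

/-- The linear Lax matrix `T(ζ) = ζ·T⁺ − T⁻` with entries in `D[z,w] = (D[z])[w]`. -/
def TofZ {n : ℕ} {D : Type*} [Ring D] (Tp Tm : Matrix (Fin n) (Fin n) D)
    (ζ : Polynomial (Polynomial D)) : Matrix (Fin n) (Fin n) (Polynomial (Polynomial D)) :=
  Matrix.of fun i j =>
    ζ * Polynomial.C (Polynomial.C (Tp i j)) - Polynomial.C (Polynomial.C (Tm i j))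

/-! Let `P` be the flip of the two tensor factors and `c = v⁻¹ - v`. Then
`R_trig(z, w) = z (R - c P) - w R`, so both sides of the trigonometric RTT relation are
polynomials in `z, w`; their seven coefficients give three RTT relations for `R`, three for
`R - c P`, and a mixed relation from the `z w` coefficient.
The flipped matrix `Ř = P R` satisfies the Hecke relation `Ř² = c Ř + 1`, so `Ř` is invertible
with inverse `Ř - c`, and `R - c P = P Ř⁻¹`. Conjugating by `P Ř⁻¹` turns each RTT relation for
`R` into the corresponding one for `R - c P`, and the mixed relation is a combination of the
others. -/

namespace Matrix

variable {ι D : Type*} [Ring D]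

/-- The matrix `z ^ i w ^ j M` over `D[z][w]`, where `z = C X` and `w = X`. -/
def bimonomial (i j : ℕ) (M : Matrix ι ι D) : Matrix ι ι D[X][X] :=
  M.map fun d => monomial j (monomial i d)

theorem bimonomial_mul [Fintype ι] (i j i' j' : ℕ) (M N : Matrix ι ι D) :
    bimonomial i j M * bimonomial i' j' N = bimonomial (i + i') (j + j') (M * N) := by
  ext x y
  simp [bimonomial, mul_apply, monomial_mul_monomial, ← map_sum]

theorem bimonomial_sub (i j : ℕ) (M N : Matrix ι ι D) :
    bimonomial i j (M - N) = bimonomial i j M - bimonomial i j N := by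
  ext x y
  simp [bimonomial]

theorem coeff_coeff_bimonomial (i j i' j' : ℕ) (M : Matrix ι ι D) (x y : ι) :
    ((bimonomial i j M x y).coeff j').coeff i' = if i = i' ∧ j = j' then M x y else 0 := by
  by_cases hi : i = i' <;> by_cases hj : j = j' <;> simp [bimonomial, coeff_monomial, hi, hj]

theorem bimonomial_one_zero (M : Matrix ι ι D) :
    bimonomial 1 0 M = of fun x y => C (C (M x y)) * C X := by
  ext x y : 2
  simp [bimonomial, ← C_mul_X_eq_monomial]

theorem bimonomial_zero_one (M : Matrix ι ι D) :
    bimonomial 0 1 M = of fun x y => C (C (M x y)) * X := by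
  ext x y : 2
  simp [bimonomial, ← C_mul_X_eq_monomial]

theorem bimonomial_zero_zero (M : Matrix ι ι D) :
    bimonomial 0 0 M = of fun x y => C (C (M x y)) := by
  ext x y : 2
  simp [bimonomial]

theorem bimonomial_linear_rtt_iff [Fintype ι] (A R X₁ Y₁ X₂ Y₂ : Matrix ι ι D) :
    (bimonomial 1 0 A - bimonomial 0 1 R) * (bimonomial 1 0 X₁ - bimonomial 0 0 Y₁) *
        (bimonomial 0 1 X₂ - bimonomial 0 0 Y₂) =
      (bimonomial 0 1 X₂ - bimonomial 0 0 Y₂) * (bimonomial 1 0 X₁ - bimonomial 0 0 Y₁) *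
        (bimonomial 1 0 A - bimonomial 0 1 R) ↔
    (R * X₁ * X₂ = X₂ * X₁ * R ∧ R * Y₁ * Y₂ = Y₂ * Y₁ * R ∧ R * Y₁ * X₂ = X₂ * Y₁ * R) ∧
    (A * X₁ * X₂ = X₂ * X₁ * A ∧ A * Y₁ * Y₂ = Y₂ * Y₁ * A ∧ A * X₁ * Y₂ = Y₂ * X₁ * A ∧
      R * X₁ * Y₂ - A * Y₁ * X₂ = Y₂ * X₁ * R - X₂ * Y₁ * A) := by
  have expansion :
      (bimonomial 1 0 A - bimonomial 0 1 R) * (bimonomial 1 0 X₁ - bimonomial 0 0 Y₁) *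
          (bimonomial 0 1 X₂ - bimonomial 0 0 Y₂) -
        (bimonomial 0 1 X₂ - bimonomial 0 0 Y₂) * (bimonomial 1 0 X₁ - bimonomial 0 0 Y₁) *
          (bimonomial 1 0 A - bimonomial 0 1 R) =
      -bimonomial 1 2 (R * X₁ * X₂ - X₂ * X₁ * R) - bimonomial 0 1 (R * Y₁ * Y₂ - Y₂ * Y₁ * R) +
        bimonomial 0 2 (R * Y₁ * X₂ - X₂ * Y₁ * R) + bimonomial 2 1 (A * X₁ * X₂ - X₂ * X₁ * A) +
        bimonomial 1 0 (A * Y₁ * Y₂ - Y₂ * Y₁ * A) - bimonomial 2 0 (A * X₁ * Y₂ - Y₂ * X₁ * A) +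
        bimonomial 1 1 (R * X₁ * Y₂ - A * Y₁ * X₂ - (Y₂ * X₁ * R - X₂ * Y₁ * A)) := by
    simp only [sub_mul, mul_sub, bimonomial_mul, bimonomial_sub]
    abel
  rw [← sub_eq_zero, expansion]
  constructor
  · intro h
    have coeff_eq_zero (i j : ℕ) (x y : ι) := congrArg (fun M => ((M x y).coeff j).coeff i) h
    refine ⟨⟨?_, ?_, ?_⟩, ?_, ?_, ?_, ?_⟩ <;> ext x y
    · simpa [coeff_coeff_bimonomial, sub_eq_zero, eq_comm] using coeff_eq_zero 1 2 x y
    · simpa [coeff_coeff_bimonomial, sub_eq_zero, eq_comm] using coeff_eq_zero 0 1 x y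
    · simpa [coeff_coeff_bimonomial, sub_eq_zero, eq_comm] using coeff_eq_zero 0 2 x y
    · simpa [coeff_coeff_bimonomial, sub_eq_zero, eq_comm] using coeff_eq_zero 2 1 x y
    · simpa [coeff_coeff_bimonomial, sub_eq_zero, eq_comm] using coeff_eq_zero 1 0 x y
    · simpa [coeff_coeff_bimonomial, sub_eq_zero, eq_comm] using coeff_eq_zero 2 0 x y
    · simpa [coeff_coeff_bimonomial, sub_eq_zero, eq_comm] using coeff_eq_zero 1 1 x y
  · rintro ⟨⟨h₁, h₂, h₃⟩, h₄, h₅, h₆, h₇⟩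
    simp [h₁, h₂, h₃, h₄, h₅, h₆, h₇, bimonomial]

end Matrix

section Hecke

variable {K S : Type*} [CommRing K] [Ring S] [Algebra K S] {P R : S} {c : K} {X₁ X₂ Y₁ Y₂ : S}

theorem SemiconjBy.symm_of_mul_self_eq_one (hP : P * P = 1) (h : SemiconjBy P X₁ X₂) :
    SemiconjBy P X₂ X₁ :=
  calc P * X₂ = P * (X₂ * P) * P := by rw [mul_assoc, mul_assoc, hP, mul_one]
    _ = X₁ * P := by rw [← h.eq, ← mul_assoc, hP, one_mul]

theorem rtt_sub_smul_of_hecke (hP : P * P = 1) (hecke : P * R * (P * R) = c • (P * R) + 1)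
    (hX : SemiconjBy P X₁ X₂) (hY : SemiconjBy P Y₁ Y₂) (h : R * Y₁ * X₂ = X₂ * Y₁ * R) :
    (R - c • P) * X₁ * Y₂ = Y₂ * X₁ * (R - c • P) := by
  let Ř : Sˣ :=
    { val := P * R
      inv := P * R - c • 1
      val_inv := by rw [mul_sub, hecke, mul_smul_comm, mul_one, add_sub_cancel_left]
      inv_val := by rw [sub_mul, hecke, smul_mul_assoc, one_mul, add_sub_cancel_left] }
  have hR : SemiconjBy R (Y₁ * X₂) (X₂ * Y₁) := by rw [SemiconjBy, ← mul_assoc, h]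
  have hŘ : SemiconjBy (Ř : S) (Y₁ * X₂) (X₁ * Y₂) :=
    ((hX.symm_of_mul_self_eq_one hP).mul_right hY).mul_left hR
  have hA : R - c • P = P * ↑Ř⁻¹ := by
    change _ = P * (P * R - c • 1)
    rw [mul_sub, ← mul_assoc, hP, one_mul, mul_smul_comm, mul_one]
  rw [hA, mul_assoc]
  exact (hY.mul_right (hX.symm_of_mul_self_eq_one hP)).mul_left hŘ.units_inv_symm_left

theorem rtt_mixed (hP : P * P = 1) (hX : SemiconjBy P X₁ X₂) (hY : SemiconjBy P Y₁ Y₂)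
    (h : R * Y₁ * X₂ = X₂ * Y₁ * R) (h' : (R - c • P) * X₁ * Y₂ = Y₂ * X₁ * (R - c • P)) :
    R * X₁ * Y₂ - (R - c • P) * Y₁ * X₂ = Y₂ * X₁ * R - X₂ * Y₁ * (R - c • P) := by
  have e₁ := (hY.mul_right (hX.symm_of_mul_self_eq_one hP)).eq
  have e₂ := (hX.mul_right (hY.symm_of_mul_self_eq_one hP)).eq
  rw [← sub_eq_zero] at h h' e₁ e₂ ⊢
  calc _ = ((R - c • P) * X₁ * Y₂ - Y₂ * X₁ * (R - c • P)) - (R * Y₁ * X₂ - X₂ * Y₁ * R) +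
        c • (P * (Y₁ * X₂) - Y₂ * X₁ * P) + c • (P * (X₁ * Y₂) - X₂ * Y₁ * P) := by
          simp only [sub_mul, mul_sub, smul_mul_assoc, mul_smul_comm, smul_sub, mul_assoc]
          abel
    _ = 0 := by rw [h, h', e₁, e₂, smul_zero, sub_zero, add_zero, add_zero]

theorem rtt_of_hecke (hP : P * P = 1) (hecke : P * R * (P * R) = c • (P * R) + 1)
    (hX : SemiconjBy P X₁ X₂) (hY : SemiconjBy P Y₁ Y₂) :
    (R * X₁ * X₂ = X₂ * X₁ * R ∧ R * Y₁ * Y₂ = Y₂ * Y₁ * R ∧ R * Y₁ * X₂ = X₂ * Y₁ * R) →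
      (R - c • P) * X₁ * X₂ = X₂ * X₁ * (R - c • P) ∧
      (R - c • P) * Y₁ * Y₂ = Y₂ * Y₁ * (R - c • P) ∧
      (R - c • P) * X₁ * Y₂ = Y₂ * X₁ * (R - c • P) ∧
      R * X₁ * Y₂ - (R - c • P) * Y₁ * X₂ = Y₂ * X₁ * R - X₂ * Y₁ * (R - c • P) := by
  rintro ⟨hXX, hYY, hYX⟩
  have hXY := rtt_sub_smul_of_hecke hP hecke hX hY hYX
  exact ⟨rtt_sub_smul_of_hecke hP hecke hX hX hXX, rtt_sub_smul_of_hecke hP hecke hY hY hYY, hXY,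
    rtt_mixed hP hX hY hYX hXY⟩

end Hecke

section Flip

abbrev flipMatrix (ι R : Type*) [DecidableEq ι] [Zero R] [One R] : Matrix (ι × ι) (ι × ι) R :=
  Equiv.Perm.permMatrix R (Equiv.prodComm ι ι)

variable {ι : Type*} [DecidableEq ι]

theorem flipMatrix_map {A B F : Type*} [Zero A] [One A] [Zero B] [One B] [FunLike F A B]
    [ZeroHomClass F A B] [OneHomClass F A B] (f : F) :
    (flipMatrix ι A).map f = flipMatrix ι B := by
  ext x y
  simp [PEquiv.toMatrix_apply, apply_ite f]

variable [Fintype ι] {R : Type*} [Ring R]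

theorem flipMatrix_mul (M : Matrix (ι × ι) (ι × ι) R) :
    flipMatrix ι R * M = of fun x y => M x.swap y := by
  ext x y
  simp [PEquiv.toMatrix_toPEquiv_mul]

theorem flipMatrix_mul_self : flipMatrix ι R * flipMatrix ι R = 1 := by
  ext x y
  simp [flipMatrix_mul, PEquiv.toMatrix_apply, one_apply]

theorem semiconjBy_flipMatrix_kron {n : ℕ} (M : Matrix (Fin n) (Fin n) R) :
    SemiconjBy (flipMatrix (Fin n) R) (kron1 M) (kron2 M) := by
  rw [SemiconjBy, flipMatrix_mul, PEquiv.mul_toMatrix_toPEquiv]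
  ext x y
  by_cases h : x.1 = y.2 <;> simp [kron1, kron2, h]

end Flip

section RMatrices

variable {n : ℕ} {k : Type*} [Field k] {A B : Type*} [Ring A] [Algebra k A] [Ring B] [Algebra k B]

theorem Rfin_map (v : kˣ) (f : A →ₐ[k] B) : (Rfin n (A := A) v).map f = Rfin n v := by
  ext x y
  simp [Rfin, apply_ite f]

theorem Rfin_mul_apply (v : kˣ) (M : Matrix (Fin n × Fin n) (Fin n × Fin n) A)
    (x y : Fin n × Fin n) :
    (Rfin n (A := A) v * M) x y =
      (if x.1 = x.2 then algebraMap k A ((v⁻¹ : kˣ) : k) else 1) * M x y +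
        if x.2 < x.1 then (algebraMap k A ((v⁻¹ : kˣ) : k) - algebraMap k A (v : k)) * M x.swap y
        else 0 := by
  have swap_eq (a : Fin n × Fin n) :
      (x.1 = a.2 ∧ x.2 = a.1 ∧ x.2 < x.1) ↔ (x.swap = a ∧ x.2 < x.1) := by
    rw [Prod.ext_iff, Prod.fst_swap, Prod.snd_swap, and_comm (a := x.1 = _)]
    tauto
  simp only [mul_apply, Rfin, of_apply, swap_eq]
  simp [add_mul, ite_mul, Finset.sum_add_distrib, ite_and]

theorem flipMatrix_mul_Rfin_hecke (v : kˣ) :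
    flipMatrix (Fin n) A * Rfin n v * (flipMatrix (Fin n) A * Rfin n v) =
      (((v⁻¹ : kˣ) : k) - v) • (flipMatrix (Fin n) A * Rfin n v) + 1 := by
  have hecke_base : flipMatrix (Fin n) k * Rfin n v * (flipMatrix (Fin n) k * Rfin n v) =
      (((v⁻¹ : kˣ) : k) - v) • (flipMatrix (Fin n) k * Rfin n v) + 1 := by
    have hv : (v : k) ≠ 0 := v.ne_zero
    ext ⟨i, j⟩ ⟨i', j'⟩
    rw [mul_assoc, flipMatrix_mul, of_apply, Rfin_mul_apply]
    simp only [Rfin, flipMatrix_mul, of_apply, Prod.fst_swap, Prod.snd_swap, Prod.swap_prod_mk,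
      Prod.mk.injEq, Matrix.add_apply, smul_of, Pi.smul_apply, smul_eq_mul, one_apply, ite_mul,
      one_mul, Algebra.algebraMap_self, RingHom.id_apply, Units.val_inv_eq_inv_val]
    split_ifs <;> first | omega | (field_simp; ring)
  have := congrArg (Algebra.ofId k A).mapMatrix hecke_base
  simpa only [map_mul, map_add, map_smul, map_one, AlgHom.mapMatrix_apply, Rfin_map,
    flipMatrix_map] using this

theorem Rtrig_eq (v : kˣ) (z w : A) :
    Rtrig n v z w = of fun x y =>
      (Rfin n (A := A) v - (((v⁻¹ : kˣ) : k) - v) • flipMatrix (Fin n) A) x y * z -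
        Rfin n v x y * w := by
  ext ⟨i, j⟩ ⟨i', j'⟩
  simp only [Rtrig, Rfin, of_apply, Matrix.sub_apply, Matrix.smul_apply]
  simp only [PEquiv.toMatrix_apply, Equiv.toPEquiv_apply, Equiv.prodComm_apply, Prod.swap_prod_mk,
    Option.mem_def, Option.some.injEq, Prod.mk.injEq, Algebra.smul_def, map_sub, mul_ite, mul_one,
    mul_zero]
  split_ifs <;> first | omega | noncomm_ring

end RMatrices

section LaxMatrix

variable {n : ℕ} {D : Type*} [Ring D]

theorem Rtrig_C_X_X {k : Type*} [Field k] [Algebra k D] (v : kˣ) :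
    Rtrig n v (C X : D[X][X]) X =
      bimonomial 1 0 (Rfin n v - (((v⁻¹ : kˣ) : k) - v) • flipMatrix (Fin n) D) -
        bimonomial 0 1 (Rfin n v) := by
  let ι : D →ₐ[k] D[X][X] := CAlgHom.comp CAlgHom
  have hA : Rfin n (A := D[X][X]) v - (((v⁻¹ : kˣ) : k) - v) • flipMatrix (Fin n) D[X][X] =
      (Rfin n v - (((v⁻¹ : kˣ) : k) - v) • flipMatrix (Fin n) D).map ι := by
    rw [← AlgHom.mapMatrix_apply, map_sub, map_smul, AlgHom.mapMatrix_apply,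
      AlgHom.mapMatrix_apply, Rfin_map, flipMatrix_map]
  rw [Rtrig_eq, hA, ← Rfin_map v ι, bimonomial_one_zero, bimonomial_zero_one]
  rfl

theorem kron1_TofZ_C_X (Tp Tm : Matrix (Fin n) (Fin n) D) :
    kron1 (TofZ Tp Tm (C X)) = bimonomial 1 0 (kron1 Tp) - bimonomial 0 0 (kron1 Tm) := by
  have hz (d : D) : C X * C (C d) = C (C d) * (C X : D[X][X]) := ((commute_X (C d)).map C).eq
  rw [bimonomial_one_zero, bimonomial_zero_zero]
  ext x y
  by_cases h : x.2 = y.2 <;> simp [kron1, TofZ, h, hz]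

theorem kron2_TofZ_X (Tp Tm : Matrix (Fin n) (Fin n) D) :
    kron2 (TofZ Tp Tm X) = bimonomial 0 1 (kron2 Tp) - bimonomial 0 0 (kron2 Tm) := by
  rw [bimonomial_zero_one, bimonomial_zero_zero]
  ext x y
  by_cases h : x.1 = y.1 <;> simp [kron2, TofZ, h, X_mul_C]

end LaxMatrix

theorem linear_trig_lax_rtt_iff_general (n : ℕ)
    (k : Type*) [Field k] (v : kˣ)
    (D : Type*) [Ring D] [Algebra k D]
    (Tp Tm : Matrix (Fin n) (Fin n) D) :
    (Rtrig n v (Polynomial.C (Polynomial.X : Polynomial D))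
          (Polynomial.X : Polynomial (Polynomial D)) *
        kron1 (TofZ Tp Tm (Polynomial.C Polynomial.X)) * kron2 (TofZ Tp Tm Polynomial.X) =
      kron2 (TofZ Tp Tm Polynomial.X) * kron1 (TofZ Tp Tm (Polynomial.C Polynomial.X)) *
        Rtrig n v (Polynomial.C (Polynomial.X : Polynomial D))
          (Polynomial.X : Polynomial (Polynomial D))) ↔
    (Rfin n (A := D) v * kron1 Tp * kron2 Tp = kron2 Tp * kron1 Tp * Rfin n (A := D) v ∧
     Rfin n (A := D) v * kron1 Tm * kron2 Tm = kron2 Tm * kron1 Tm * Rfin n (A := D) v ∧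
     Rfin n (A := D) v * kron1 Tm * kron2 Tp = kron2 Tp * kron1 Tm * Rfin n (A := D) v) := by
  rw [Rtrig_C_X_X, kron1_TofZ_C_X, kron2_TofZ_X, bimonomial_linear_rtt_iff,
    and_iff_left_of_imp (rtt_of_hecke flipMatrix_mul_self (flipMatrix_mul_Rfin_hecke v)
      (semiconjBy_flipMatrix_kron Tp) (semiconjBy_flipMatrix_kron Tm))]

/-- `T(z) = z·T⁺ − T⁻` satisfies the trigonometric RTT relation
`R_trig(z,w)·T₁(z)·T₂(w) = T₂(w)·T₁(z)·R_trig(z,w)` over `D[z,w]`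
if and only if the three finite trigonometric RTT relations
`R·T⁺₁·T⁺₂ = T⁺₂·T⁺₁·R`, `R·T⁻₁·T⁻₂ = T⁻₂·T⁻₁·R`, `R·T⁻₁·T⁺₂ = T⁺₂·T⁻₁·R` hold. -/
theorem linear_trig_lax_rtt_iff (n : ℕ) (hn : 1 ≤ n)
    (k : Type*) [Field k] (v : kˣ)
    (D : Type*) [Ring D] [Algebra k D]
    (Tp Tm : Matrix (Fin n) (Fin n) D) :
    (Rtrig n v (Polynomial.C (Polynomial.X : Polynomial D))
          (Polynomial.X : Polynomial (Polynomial D)) *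
        kron1 (TofZ Tp Tm (Polynomial.C Polynomial.X)) * kron2 (TofZ Tp Tm Polynomial.X) =
      kron2 (TofZ Tp Tm Polynomial.X) * kron1 (TofZ Tp Tm (Polynomial.C Polynomial.X)) *
        Rtrig n v (Polynomial.C (Polynomial.X : Polynomial D))
          (Polynomial.X : Polynomial (Polynomial D))) ↔
    (Rfin n (A := D) v * kron1 Tp * kron2 Tp = kron2 Tp * kron1 Tp * Rfin n (A := D) v ∧
     Rfin n (A := D) v * kron1 Tm * kron2 Tm = kron2 Tm * kron1 Tm * Rfin n (A := D) v ∧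
     Rfin n (A := D) v * kron1 Tm * kron2 Tp = kron2 Tp * kron1 Tm * Rfin n (A := D) v) :=
  linear_trig_lax_rtt_iff_general n k v D Tp Tm
end
end

section
/- Let k be a field, v ∈ kˣ a unit, and A an associative unital k-algebra containing invertible elements W and D with D·W = v·W·D. Then the 2×2 trigonometric Lax matrix T(z) = [[z·W⁻¹ − v·W, z·W·D⁻¹],[−v·W·D, z·W]] has quantum determinant qdet T(z) = v⁻²·z². -/
/-!
Since `z` is central in `A[z]`, the quantum determinant of a matrix linear in `z` is a quadratic
polynomial whose coefficients are computed in `A`. Here the `z²` coefficient is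
`W⁻¹·v⁻²·W = v⁻²`, and the `z` coefficient `v·W·v⁻²·W − v⁻¹·(W·D⁻¹)·(v·W·D)` vanishes because
`D⁻¹·(v·W·D) = D⁻¹·(D·W) = W`.
-/

open Polynomial

noncomputable section

/-- The quantum determinant of a 2×2 matrix `T(z)` over `A[z]` (given as a function of the
substituted variable): `qdet T(z) = T(z)₁₁·T(v⁻²z)₂₂ − v⁻¹·T(z)₁₂·T(v⁻²z)₂₁`. -/
def qdet2 {A : Type*} [Ring A] (vinv : A)
    (T : Polynomial A → Matrix (Fin 2) (Fin 2) (Polynomial A)) : Polynomial A :=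
  T Polynomial.X 0 0 * T (Polynomial.C (vinv * vinv) * Polynomial.X) 1 1 -
    Polynomial.C vinv * (T Polynomial.X 0 1 * T (Polynomial.C (vinv * vinv) * Polynomial.X) 1 0)

theorem qdet2_linear_lax {A : Type*} [Ring A] (u a b c d e : A) :
    qdet2 u (fun ζ => !![ζ * C a - C b, ζ * C c; -C d, ζ * C e]) =
      C (a * (u * u) * e) * X ^ 2 - C (b * (u * u) * e - u * (c * d)) * X := by
  simp only [qdet2, Matrix.of_apply, Matrix.cons_val', Matrix.cons_val_zero, Matrix.cons_val_one,
    Matrix.empty_val', Matrix.cons_val_fin_one]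
  simp only [map_sub, map_mul, sub_mul, mul_neg, pow_two, X_mul, mul_assoc]
  abel

section Coefficients

variable {k A : Type*} [Field k] [Ring A] [Algebra k A] (v : kˣ) (W D : Aˣ)

theorem units_inv_mul_algebraMap_mul (x : k) :
    ((W⁻¹ : Aˣ) : A) * algebraMap k A x * W = algebraMap k A x := by
  rw [← Algebra.commutes, mul_assoc, Units.inv_mul, mul_one]

theorem qdet_linear_coeff_eq_zero
    (hWD : (D : A) * W = algebraMap k A v * (W * D)) :
    algebraMap k A v * W * (algebraMap k A (v⁻¹ : kˣ) * algebraMap k A (v⁻¹ : kˣ)) * W -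
        algebraMap k A (v⁻¹ : kˣ) * (W * ((D⁻¹ : Aˣ) : A) * (algebraMap k A v * (W * D))) = 0 := by
  have hcd : (W : A) * ((D⁻¹ : Aˣ) : A) * (algebraMap k A v * (W * D)) = W * W := by
    rw [← hWD, mul_assoc, Units.inv_mul_cancel_left]
  rw [hcd, ← map_mul, mul_assoc _ (W : A), ← Algebra.commutes, ← mul_assoc, ← map_mul,
    ← mul_assoc, Units.mul_inv, one_mul, mul_assoc, sub_self]

end Coefficients

/-- The trigonometric Lax matrix `T(z) = [[z·W⁻¹ − v·W, z·W·D⁻¹],[−v·W·D, z·W]]`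
has quantum determinant `v⁻²·z²`. -/
theorem qdet_trig_lax_case1 (k : Type*) [Field k] (v : kˣ)
    (A : Type*) [Ring A] [Algebra k A] (W Dd : Aˣ)
    (hWD : (Dd : A) * (W : A) = algebraMap k A (v : k) * ((W : A) * (Dd : A))) :
    qdet2 (algebraMap k A ((v⁻¹ : kˣ) : k))
        (fun ζ =>
          !![ζ * Polynomial.C ((W⁻¹ : Aˣ) : A) -
               Polynomial.C (algebraMap k A (v : k) * (W : A)),
             ζ * Polynomial.C ((W : A) * ((Dd⁻¹ : Aˣ) : A));
             -Polynomial.C (algebraMap k A (v : k) * ((W : A) * (Dd : A))),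
             ζ * Polynomial.C (W : A)]) =
      Polynomial.C (algebraMap k A ((v⁻¹ : kˣ) : k) * algebraMap k A ((v⁻¹ : kˣ) : k)) *
        Polynomial.X ^ 2 := by
  rw [qdet2_linear_lax, ← map_mul, units_inv_mul_algebraMap_mul, map_mul,
    qdet_linear_coeff_eq_zero v W Dd hWD, map_zero, zero_mul, sub_zero]
end
end

section
/- Let k be a field, v ∈ kˣ a unit, and A an associative unital k-algebra containing invertible elements W and D with D·W = v·W·D. Then the 2×2 trigonometric Lax matrix T(z) = [[z·W⁻¹ − v·W, z·v⁻²·W⁻³·D⁻¹],[−v·W·D, −v⁻³·W⁻¹]] has quantum determinant qdet T(z) = v⁻². -/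
/-!
Only the first row of the Lax matrix depends on `z`, so `qdet T(z)` is affine in `z`. Its
constant term is `(−vW)(−v⁻³W⁻¹) = v⁻²`, and its `z`-coefficient
`−v⁻³W⁻² + v⁻²W⁻³(D⁻¹WD)` vanishes because the commutation relation gives `D⁻¹WD = v⁻¹W`.
-/

open Polynomial

noncomputable section

theorem qdet2_eq_C_sub_C_mul_X {A : Type*} [Ring A] (vinv p q r s t : A) :
    qdet2 vinv (fun ζ => !![ζ * C p - C q, ζ * C r; -C s, -C t]) =
      C (q * t) - C (p * t - vinv * (r * s)) * X := by
  simp only [qdet2, Matrix.of_apply, Matrix.cons_val', Matrix.cons_val_zero, Matrix.cons_val_one,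
    Matrix.empty_val', Matrix.cons_val_fin_one, C_mul, C_sub, sub_mul, mul_neg, mul_assoc, X_mul_C]
  abel

theorem qdet2_eq_C_of_mul_eq {A : Type*} [Ring A] {vinv p q r s t : A}
    (h : p * t = vinv * (r * s)) :
    qdet2 vinv (fun ζ => !![ζ * C p - C q, ζ * C r; -C s, -C t]) = C (q * t) := by
  rw [qdet2_eq_C_sub_C_mul_X, h, sub_self, map_zero, zero_mul, sub_zero]

theorem Units.inv_mul_mul_eq_inv_smul {G M : Type*} [Group G] [Monoid M] [MulAction G M]
    [SMulCommClass G M M] {g : G} {W D : Mˣ} (h : (D : M) * W = g • ((W : M) * D)) :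
    (↑D⁻¹ : M) * (W * D) = g⁻¹ • (W : M) := by
  rw [eq_inv_smul_iff, ← mul_smul_comm, ← h, Units.inv_mul_cancel_left]

/-- The trigonometric Lax matrix `T(z) = [[z·W⁻¹ − v·W, z·v⁻²·W⁻³·D⁻¹],[−v·W·D, −v⁻³·W⁻¹]]`
has quantum determinant `v⁻²`. -/
theorem qdet_trig_lax_case3 (k : Type*) [Field k] (v : kˣ)
    (A : Type*) [Ring A] [Algebra k A] (W Dd : Aˣ)
    (hWD : (Dd : A) * (W : A) = algebraMap k A (v : k) * ((W : A) * (Dd : A))) :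
    qdet2 (algebraMap k A ((v⁻¹ : kˣ) : k))
        (fun ζ =>
          !![ζ * Polynomial.C ((W⁻¹ : Aˣ) : A) -
               Polynomial.C (algebraMap k A (v : k) * (W : A)),
             ζ * Polynomial.C (algebraMap k A ((v⁻¹ : kˣ) : k) * algebraMap k A ((v⁻¹ : kˣ) : k) * ((W⁻¹ : Aˣ) : A) ^ 3 * ((Dd⁻¹ : Aˣ) : A));
             -Polynomial.C (algebraMap k A (v : k) * ((W : A) * (Dd : A))),
             -Polynomial.C (algebraMap k A ((v⁻¹ : kˣ) : k) ^ 3 * ((W⁻¹ : Aˣ) : A))]) =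
      Polynomial.C (algebraMap k A ((v⁻¹ : kˣ) : k) * algebraMap k A ((v⁻¹ : kˣ) : k)) := by
  have hconj : ((Dd⁻¹ : Aˣ) : A) * (W * Dd) = v⁻¹ • (W : A) :=
    Units.inv_mul_mul_eq_inv_smul (by rwa [Units.smul_def, Algebra.smul_def])
  rw [qdet2_eq_C_of_mul_eq]
  · congr 1
    simp [Algebra.algebraMap_eq_smul_one, smul_smul, pow_succ, mul_assoc]
  · simp [Algebra.algebraMap_eq_smul_one, smul_smul, pow_succ, mul_assoc, hconj, Units.smul_def]
end
end

section
/- Let k be a field, v ∈ kˣ a unit, A an associative unital k-algebra containing invertible elements W and D with D·W = v·W·D, and x₁ ∈ kˣ. Then the 2×2 trigonometric Lax matrix T(z) = [[z·W⁻¹ − v·W, z·W·(1 − v⁻¹·x₁·W⁻²)·D⁻¹],[−v·W·D, z·W]] has quantum determinant qdet T(z) = v⁻²·z·(z − x₁). -/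
open Polynomial

noncomputable section

/-! Each entry of `T(ζ)` has the form `ζ·a + b` with `a, b ∈ A`, and `ζ` commutes with `A`, so
`qdet T` is a polynomial of degree two whose coefficients are computed in `A`. The only
noncommutative input is `D⁻¹·W·D = v⁻¹·W`: it turns the off-diagonal product
`v⁻¹·W(1 − v⁻¹x₁W⁻²)D⁻¹·vWD` into `v⁻¹·W(1 − v⁻¹x₁W⁻²)W = v⁻¹W² − v⁻²x₁`, whose `W²` term
cancels against the diagonal product. -/

theorem C_mul_X_mul_X_sub_C {A : Type*} [Ring A] (q x : A) :
    C q * (X * (X - C x)) = C q * X ^ 2 + C (-(q * x)) * X := by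
  rw [mul_sub, X_mul_C, pow_two, mul_sub, ← mul_assoc (C q) (C x), ← C_mul, C_neg, neg_mul,
    sub_eq_add_neg]

theorem qdet2_affine {A : Type*} [Ring A] (vinv a b c d e : A) :
    qdet2 vinv (fun ζ => !![ζ * C a - C b, ζ * C c; -C d, ζ * C e]) =
      C (a * (vinv * vinv) * e) * X ^ 2 + C (vinv * c * d - b * (vinv * vinv) * e) * X := by
  simp only [qdet2, Matrix.of_apply, Matrix.cons_val', Matrix.cons_val_zero, Matrix.cons_val_one,
    Matrix.empty_val', Matrix.cons_val_fin_one]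
  simp only [X_mul_C, sub_mul, mul_neg, sub_neg_eq_add, mul_assoc]
  rw [(commute_X (C (vinv * vinv))).left_comm, (commute_X (C e)).left_comm, C_sub, sub_mul]
  simp only [← mul_assoc, ← C_mul, pow_two]
  abel

section
variable {k A : Type*} [CommRing k] [Ring A] [Algebra k A]

theorem units_mul_sub_algebraMap_mul_inv_sq_mul (u : Aˣ) (r : k) :
    (u : A) * (1 - algebraMap k A r * (u⁻¹ : Aˣ) ^ 2) * u = u * u - algebraMap k A r := by
  rw [mul_sub, sub_mul, mul_one, ← mul_assoc (u : A), ← Algebra.commutes, pow_two]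
  simp only [mul_assoc, Units.mul_inv_cancel_left, Units.inv_mul, mul_one]

theorem trig_lax_linear_coeff (v : kˣ) (x : k) (W D : Aˣ)
    (hWD : (D : A) * W = algebraMap k A v * (W * D)) :
    algebraMap k A ↑v⁻¹ * (W * (1 - algebraMap k A ↑v⁻¹ * algebraMap k A x * (W⁻¹ : Aˣ) ^ 2) *
        (D⁻¹ : Aˣ)) * (algebraMap k A v * (W * D)) -
      algebraMap k A v * W * (algebraMap k A ↑v⁻¹ * algebraMap k A ↑v⁻¹) * W =
    -(algebraMap k A ↑v⁻¹ * algebraMap k A ↑v⁻¹ * algebraMap k A x) := by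
  have hconj : ((D⁻¹ : Aˣ) : A) * (algebraMap k A v * (W * D)) = W := by
    rw [← hWD, Units.inv_mul_cancel_left]
  have hscalar : algebraMap k A v * W * (algebraMap k A ↑v⁻¹ * algebraMap k A ↑v⁻¹) * W =
      algebraMap k A ↑v⁻¹ * (W * W) := by
    rw [← map_mul (algebraMap k A) (↑v⁻¹), mul_assoc _ (W : A), ← Algebra.commutes, ← mul_assoc,
      ← map_mul, Units.mul_inv_cancel_left, mul_assoc]
  rw [mul_assoc (algebraMap k A ↑v⁻¹), mul_assoc _ ((D⁻¹ : Aˣ) : A), hconj, hscalar,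
    ← map_mul (algebraMap k A) _ x, units_mul_sub_algebraMap_mul_inv_sq_mul, mul_sub,
    sub_sub_cancel_left, map_mul, mul_assoc]

end

/-- The trigonometric Lax matrix
`T(z) = [[z·W⁻¹ − v·W, z·W·(1 − v⁻¹·x₁·W⁻²)·D⁻¹],[−v·W·D, z·W]]`
has quantum determinant `v⁻²·z·(z − x₁)`. -/
theorem qdet_trig_lax_case4 (k : Type*) [Field k] (v : kˣ)
    (A : Type*) [Ring A] [Algebra k A] (W Dd : Aˣ) (x₁ : kˣ)
    (hWD : (Dd : A) * (W : A) = algebraMap k A (v : k) * ((W : A) * (Dd : A))) :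
    qdet2 (algebraMap k A ((v⁻¹ : kˣ) : k))
        (fun ζ =>
          !![ζ * Polynomial.C ((W⁻¹ : Aˣ) : A) -
               Polynomial.C (algebraMap k A (v : k) * (W : A)),
             ζ * Polynomial.C ((W : A) * (1 - algebraMap k A ((v⁻¹ : kˣ) : k) * algebraMap k A (x₁ : k) * ((W⁻¹ : Aˣ) : A) ^ 2) * ((Dd⁻¹ : Aˣ) : A));
             -Polynomial.C (algebraMap k A (v : k) * ((W : A) * (Dd : A))),
             ζ * Polynomial.C (W : A)]) =
      Polynomial.C (algebraMap k A ((v⁻¹ : kˣ) : k) * algebraMap k A ((v⁻¹ : kˣ) : k)) *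
        (Polynomial.X * (Polynomial.X - Polynomial.C (algebraMap k A (x₁ : k)))) := by
  rw [C_mul_X_mul_X_sub_C, qdet2_affine, trig_lax_linear_coeff v x₁ W Dd hWD,
    Units.commute_iff_inv_mul_cancel.mp ((Algebra.commute_algebraMap_right _ _).mul_right
      (Algebra.commute_algebraMap_right _ _))]
end
end

section
/- Let k be a field, v ∈ kˣ a unit, A an associative unital k-algebra containing invertible elements W and D with D·W = v·W·D, and x₁ ∈ kˣ. Then the 2×2 trigonometric Lax matrix T(z) = [[z·W⁻¹ − v·W, z·v⁻¹·W⁻¹·(1 − v⁻¹·x₁·W⁻²)·D⁻¹],[−v·W·D, v⁻³·W⁻¹·x₁]] has quantum determinant qdet T(z) = v⁻²·(z − x₁). -/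
/-!
Only the top row of `T(z)` depends on `z`, so the substitution `z ↦ v⁻²z` does not affect the
bottom row and `qdet T(z)` is affine in `z`. Its constant term is `v·W·v⁻³·W⁻¹·x₁ = v⁻²·x₁`.
In the `z`-coefficient the relation `D·W = v·W·D`, read as `D⁻¹·W·D = v⁻¹·W`, turns the
off-diagonal product into `v⁻²·(1 − v⁻¹·x₁·W⁻²)`, whose `W⁻²`-term cancels the one coming from
the diagonal, leaving `v⁻²`.
-/

open Polynomial

noncomputable section

theorem qdet2_affine_top_const_bottom {A : Type*} [Ring A] (u a b e f g : A) :
    qdet2 u (fun ζ => !![ζ * C a - C b, ζ * C e; C f, C g]) =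
      X * C (a * g - u * (e * f)) - C (b * g) := by
  simp only [qdet2, Matrix.of_apply, Matrix.cons_val', Matrix.cons_val_zero, Matrix.cons_val_one,
    Matrix.empty_val', Matrix.cons_val_fin_one, C_mul, C_sub, sub_mul, mul_sub, mul_assoc]
  rw [← mul_assoc (C u), ← X_mul, mul_assoc]
  abel

theorem Units.inv_mul_mul_eq_inv_smul_of_mul_eq {k A : Type*} [CommSemiring k] [Semiring A]
    [Algebra k A] (c : kˣ) (D : Aˣ) (w : A) (h : (D : A) * w = algebraMap k A c * (w * D)) :
    ((D⁻¹ : Aˣ) : A) * (w * D) = c⁻¹ • w := by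
  rw [← Algebra.smul_def, ← Units.smul_def] at h
  rw [eq_inv_smul_iff, ← mul_smul_comm, ← h, Units.inv_mul_cancel_left]

section TrigLax

variable {k A : Type*} [Field k] [Ring A] [Algebra k A] (v x₁ : kˣ) (W : Aˣ)

theorem trigLax_qdet_coeff_X (D : Aˣ)
    (hWD : (D : A) * (W : A) = algebraMap k A (v : k) * ((W : A) * (D : A))) :
    ((W⁻¹ : Aˣ) : A) * (algebraMap k A ((v⁻¹ : kˣ) : k) ^ 3 * ((W⁻¹ : Aˣ) : A) *
        algebraMap k A (x₁ : k)) -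
      algebraMap k A ((v⁻¹ : kˣ) : k) *
        ((algebraMap k A ((v⁻¹ : kˣ) : k) * ((W⁻¹ : Aˣ) : A) *
            (1 - algebraMap k A ((v⁻¹ : kˣ) : k) * algebraMap k A (x₁ : k) *
              ((W⁻¹ : Aˣ) : A) ^ 2) * ((D⁻¹ : Aˣ) : A)) *
          -(algebraMap k A (v : k) * ((W : A) * (D : A)))) =
      algebraMap k A ((v⁻¹ : kˣ) : k) * algebraMap k A ((v⁻¹ : kˣ) : k) := by
  have hconj := Units.inv_mul_mul_eq_inv_smul_of_mul_eq v D W hWD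
  simp only [Algebra.algebraMap_eq_smul_one, _root_.smul_pow, one_pow, mul_sub, sub_mul, mul_neg,
    mul_one, one_mul, smul_mul_assoc, mul_smul_comm, smul_smul, mul_assoc, pow_two, Units.smul_def, hconj,
    Units.inv_mul]
  match_scalars
  · field_simp
    ring
  · field_simp

theorem trigLax_qdet_coeff_const :
    (algebraMap k A (v : k) * (W : A)) *
        (algebraMap k A ((v⁻¹ : kˣ) : k) ^ 3 * ((W⁻¹ : Aˣ) : A) * algebraMap k A (x₁ : k)) =
      (algebraMap k A ((v⁻¹ : kˣ) : k) * algebraMap k A ((v⁻¹ : kˣ) : k)) *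
        algebraMap k A (x₁ : k) := by
  simp only [Algebra.algebraMap_eq_smul_one, _root_.smul_pow, one_pow, mul_one, one_mul,
    smul_mul_assoc, mul_smul_comm, smul_smul, Units.mul_inv, Units.val_inv_eq_inv_val]
  congr 1
  field_simp

end TrigLax

/-- The trigonometric Lax matrix
`T(z) = [[z·W⁻¹ − v·W, z·v⁻¹·W⁻¹·(1 − v⁻¹·x₁·W⁻²)·D⁻¹],[−v·W·D, v⁻³·W⁻¹·x₁]]`
has quantum determinant `v⁻²·(z − x₁)`. -/
theorem qdet_trig_lax_case5 (k : Type*) [Field k] (v : kˣ)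
    (A : Type*) [Ring A] [Algebra k A] (W Dd : Aˣ) (x₁ : kˣ)
    (hWD : (Dd : A) * (W : A) = algebraMap k A (v : k) * ((W : A) * (Dd : A))) :
    qdet2 (algebraMap k A ((v⁻¹ : kˣ) : k))
        (fun ζ =>
          !![ζ * Polynomial.C ((W⁻¹ : Aˣ) : A) -
               Polynomial.C (algebraMap k A (v : k) * (W : A)),
             ζ * Polynomial.C (algebraMap k A ((v⁻¹ : kˣ) : k) * ((W⁻¹ : Aˣ) : A) * (1 - algebraMap k A ((v⁻¹ : kˣ) : k) * algebraMap k A (x₁ : k) * ((W⁻¹ : Aˣ) : A) ^ 2) * ((Dd⁻¹ : Aˣ) : A));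
             -Polynomial.C (algebraMap k A (v : k) * ((W : A) * (Dd : A))),
             Polynomial.C (algebraMap k A ((v⁻¹ : kˣ) : k) ^ 3 * ((W⁻¹ : Aˣ) : A) * algebraMap k A (x₁ : k))]) =
      Polynomial.C (algebraMap k A ((v⁻¹ : kˣ) : k) * algebraMap k A ((v⁻¹ : kˣ) : k)) *
        (Polynomial.X - Polynomial.C (algebraMap k A (x₁ : k))) := by
  rw [← C_neg, qdet2_affine_top_const_bottom, trigLax_qdet_coeff_X v x₁ W Dd hWD,
    trigLax_qdet_coeff_const, C_mul (a := _ * _), mul_sub, X_mul]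
end
end

section
/- Let k be a field, v ∈ kˣ a unit, A an associative unital k-algebra containing invertible elements W and D with D·W = v·W·D, and x₁, x₂ ∈ kˣ. Then the 2×2 trigonometric Lax matrix T(z) = [[z·W⁻¹ − v·W, z·W·(1 − v⁻¹·x₁·W⁻²)·(1 − v⁻¹·x₂·W⁻²)·D⁻¹],[−v·W·D, z·W − v⁻³·W⁻¹·x₁·x₂]] has quantum determinant qdet T(z) = v⁻²·(z − x₁)·(z − x₂). -/
/-!
The relation `D⁻¹·W·D = v⁻¹·W` turns `T(z)₁₂·T(v⁻²z)₂₁` into `−z·W(1 − v⁻¹x₁W⁻²)(1 − v⁻¹x₂W⁻²)W`,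
so `D` disappears from the quantum determinant. What remains involves only `z`, `W`, `W⁻¹` and
scalars; `W` and `W⁻¹` generate a commutative subalgebra `S ⊆ A`, and in `S[z]` the identity is a
direct computation using `W·W⁻¹ = 1` and `v·v⁻¹ = 1`.
-/

open Polynomial

noncomputable section

theorem trig_lax_reduced_qdet_eq {R : Type*} [CommRing R] {v vi w wi : R} (x₁ x₂ : R)
    (hv : v * vi = 1) (hw : w * wi = 1) :
    (X * C wi - C (v * w)) * (C (vi * vi) * X * C w - C (vi ^ 3 * wi * x₁ * x₂)) +
        C vi * (X * C (w * (1 - vi * x₁ * wi ^ 2) * (1 - vi * x₂ * wi ^ 2) * w)) =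
      C (vi * vi) * ((X - C x₁) * (X - C x₂)) := by
  have hv' : C v * C vi = 1 := by rw [← C_mul, hv, C_1]
  have hw' : C w * C wi = 1 := by rw [← C_mul, hw, C_1]
  simp only [map_mul, map_sub, map_pow, map_one]
  linear_combination (C vi ^ 2 * C x₁ * C x₂ - C vi * X * C w ^ 2) * hv' +
    (X ^ 2 * C vi ^ 2 + C vi ^ 3 * C x₁ * C x₂ * C v +
      (C vi ^ 3 * C x₁ * C x₂ * C wi ^ 2 - C vi ^ 2 * (C x₁ + C x₂)) * X * (C w * C wi + 1)) * hw'

theorem trig_lax_reduced_qdet_eq_of_units {k A : Type*} [CommRing k] [Ring A] [Algebra k A]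
    (v : kˣ) (W : Aˣ) (x₁ x₂ : k) :
    let vi := algebraMap k A ((v⁻¹ : kˣ) : k)
    let wi := ((W⁻¹ : Aˣ) : A)
    (X * C wi - C (algebraMap k A v * W)) *
        (C (vi * vi) * X * C (W : A) - C (vi ^ 3 * wi * algebraMap k A x₁ * algebraMap k A x₂)) +
        C vi * (X * C (W * (1 - vi * algebraMap k A x₁ * wi ^ 2) *
          (1 - vi * algebraMap k A x₂ * wi ^ 2) * W)) =
      C (vi * vi) * ((X - C (algebraMap k A x₁)) * (X - C (algebraMap k A x₂))) := by
  intro vi wi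
  let S := Algebra.adjoin k {(W : A), wi}
  have : IsMulCommutative S := Algebra.isMulCommutative_adjoin k <| by
    rintro a (rfl | rfl) b (rfl | rfl) <;> simp [wi]
  open scoped IsMulCommutative in
  have h := congrArg (Polynomial.map (S.val : S →+* A))
    (trig_lax_reduced_qdet_eq (v := algebraMap k S v) (vi := algebraMap k S ((v⁻¹ : kˣ) : k))
      (w := (⟨W, Algebra.subset_adjoin (by simp)⟩ : S))
      (wi := (⟨wi, Algebra.subset_adjoin (by simp)⟩ : S))
      (algebraMap k S x₁) (algebraMap k S x₂) (by simp [← map_mul]) (Subtype.ext (by simp [wi])))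
  simpa [Polynomial.map_mul, Polynomial.map_sub] using h

/-- The trigonometric Lax matrix
`T(z) = [[z·W⁻¹ − v·W, z·W·(1 − v⁻¹·x₁·W⁻²)·(1 − v⁻¹·x₂·W⁻²)·D⁻¹],[−v·W·D, z·W − v⁻³·W⁻¹·x₁·x₂]]`
has quantum determinant `v⁻²·(z − x₁)·(z − x₂)`. -/
theorem qdet_trig_lax_case6 (k : Type*) [Field k] (v : kˣ)
    (A : Type*) [Ring A] [Algebra k A] (W Dd : Aˣ) (x₁ x₂ : kˣ)
    (hWD : (Dd : A) * (W : A) = algebraMap k A (v : k) * ((W : A) * (Dd : A))) :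
    qdet2 (algebraMap k A ((v⁻¹ : kˣ) : k))
        (fun ζ =>
          !![ζ * Polynomial.C ((W⁻¹ : Aˣ) : A) -
               Polynomial.C (algebraMap k A (v : k) * (W : A)),
             ζ * Polynomial.C ((W : A) * (1 - algebraMap k A ((v⁻¹ : kˣ) : k) * algebraMap k A (x₁ : k) * ((W⁻¹ : Aˣ) : A) ^ 2) *
               (1 - algebraMap k A ((v⁻¹ : kˣ) : k) * algebraMap k A (x₂ : k) * ((W⁻¹ : Aˣ) : A) ^ 2) * ((Dd⁻¹ : Aˣ) : A));
             -Polynomial.C (algebraMap k A (v : k) * ((W : A) * (Dd : A))),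
             ζ * Polynomial.C (W : A) -
               Polynomial.C (algebraMap k A ((v⁻¹ : kˣ) : k) ^ 3 * ((W⁻¹ : Aˣ) : A) * algebraMap k A (x₁ : k) * algebraMap k A (x₂ : k))]) =
      Polynomial.C (algebraMap k A ((v⁻¹ : kˣ) : k) * algebraMap k A ((v⁻¹ : kˣ) : k)) *
        ((Polynomial.X - Polynomial.C (algebraMap k A (x₁ : k))) *
          (Polynomial.X - Polynomial.C (algebraMap k A (x₂ : k)))) := by
  have hD : ((Dd⁻¹ : Aˣ) : A) * (algebraMap k A v * (W * Dd)) = W := by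
    rw [← hWD, Units.inv_mul_cancel_left]
  simp only [qdet2, Matrix.of_apply, Matrix.cons_val', Matrix.cons_val_zero, Matrix.empty_val',
    Matrix.cons_val_fin_one, Matrix.cons_val_one]
  rw [← trig_lax_reduced_qdet_eq_of_units v W, mul_neg, mul_assoc X, ← C_mul,
    mul_assoc _ _ (_ * _), hD, mul_neg, sub_neg_eq_add]
end
end

section
/- Let m ≥ 1, let w₁, …, w_m ∈ ℂ be pairwise distinct, let u₁, …, u_{m+1} ∈ ℂ, and let r' ≠ s' be two distinct indices in {1, …, m+1}. Assume w_k ≠ 1 + u_{s'} for every 1 ≤ k ≤ m. Then 1 + ∑_{k=1}^{m} [ ∏_{1 ≤ j ≤ m+1, j ≠ r'} (w_k − 1 − u_j) ] / [ ∏_{1 ≤ j ≤ m, j ≠ k} (w_k − w_j) · (1 + u_{s'} − w_k) ] = 0. -/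
/-!
The sum is a Lagrange interpolation formula in disguise. The polynomial
`P(z) = ∏_{j ≠ r'} (z - 1 - u_j)` is monic of degree `m`, so summing `P(x_i) / ∏_{j ≠ i} (x_i - x_j)`
over the `m + 1` distinct nodes `w_1, …, w_m, 1 + u_{s'}` gives its leading coefficient `1`; the
node `1 + u_{s'}` is a root of `P` and contributes nothing.
-/

open Finset Polynomial

lemma Finset.insertNone_erase_some {α : Type*} [DecidableEq α] (s : Finset α) (i : α) :
    (insertNone s).erase (some i) = insertNone (s.erase i) := by
  ext o
  cases o <;> simp

lemma Set.injOn_insertNone_elim {α β : Type*} {s : Finset α} {w : α → β} (hw : Set.InjOn w s)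
    {a : β} (ha : ∀ i ∈ s, w i ≠ a) :
    Set.InjOn (fun o : Option α => o.elim a w) (insertNone s) := by
  rintro (_ | i) hi (_ | j) hj hij
  · rfl
  · exact absurd hij.symm (ha j (by simpa using hj))
  · exact absurd hij (ha i (by simpa using hi))
  · exact congrArg some (hw (by simpa using hi) (by simpa using hj) hij)

theorem Lagrange.leadingCoeff_eq_sum_of_eval_eq_zero {F ι : Type*} [Field F] [DecidableEq ι]
    {s : Finset ι} {w : ι → F} (hw : Set.InjOn w s) {a : F} (ha : ∀ i ∈ s, w i ≠ a)
    {P : F[X]} (hP : P.degree = #s) (hPa : P.eval a = 0) :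
    P.leadingCoeff = ∑ i ∈ s, P.eval (w i) / ((∏ j ∈ s.erase i, (w i - w j)) * (w i - a)) := by
  have hcard : #(insertNone s) = P.degree + 1 := by rw [card_insertNone, hP]; norm_cast
  rw [Lagrange.leadingCoeff_eq_sum (Set.injOn_insertNone_elim hw ha) hcard, sum_insertNone]
  simp only [Option.elim, hPa, zero_div, zero_add, insertNone_erase_some, prod_insertNone,
    mul_comm]

theorem simplification_one_general (m : ℕ)
    (w : Fin m → ℂ) (hw : Function.Injective w)
    (u : Fin (m + 1) → ℂ) (r' s' : Fin (m + 1)) (hrs : r' ≠ s')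
    (hws : ∀ k, w k ≠ 1 + u s') :
    1 + ∑ k, (∏ j ∈ Finset.univ.erase r', (w k - 1 - u j)) /
        ((∏ j ∈ Finset.univ.erase k, (w k - w j)) * (1 + u s' - w k)) = 0 := by
  set P := Lagrange.nodal (univ.erase r') (fun j => 1 + u j)
  have hP : P.degree = #(univ : Finset (Fin m)) := by simp [P, Lagrange.degree_nodal]
  have hPa : P.eval (1 + u s') = 0 :=
    Lagrange.eval_nodal_at_node (v := fun j => 1 + u j) (mem_erase.mpr ⟨hrs.symm, mem_univ s'⟩)
  have hsum := Lagrange.leadingCoeff_eq_sum_of_eval_eq_zero hw.injOn (fun k _ => hws k) hP hPa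
  rw [Lagrange.nodal_monic.leadingCoeff] at hsum
  have hterm (k : Fin m) : (∏ j ∈ univ.erase r', (w k - 1 - u j)) /
      ((∏ j ∈ univ.erase k, (w k - w j)) * (1 + u s' - w k)) =
      -(P.eval (w k) / ((∏ j ∈ univ.erase k, (w k - w j)) * (w k - (1 + u s')))) := by
    rw [Lagrange.eval_nodal, ← neg_sub (1 + u s'), mul_neg, div_neg, neg_neg]
    simp only [sub_add_eq_sub_sub]
  rw [sum_congr rfl fun k _ => hterm k, sum_neg_distrib, ← hsum, add_neg_cancel]

/-- Simplification identity (1): for pairwise distinct `w₁,…,w_m`, any `u₁,…,u_{m+1}`,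
distinct indices `r' ≠ s'` in `{1,…,m+1}`, and `w_k ≠ 1 + u_{s'}` for all `k`,
`1 + ∑_k  ∏_{j≠r'}(w_k − 1 − u_j) / ( ∏_{j≠k}(w_k − w_j) · (1 + u_{s'} − w_k) ) = 0`. -/
theorem simplification_one (m : ℕ) (hm : 1 ≤ m)
    (w : Fin m → ℂ) (hw : Function.Injective w)
    (u : Fin (m + 1) → ℂ) (r' s' : Fin (m + 1)) (hrs : r' ≠ s')
    (hws : ∀ k, w k ≠ 1 + u s') :
    1 + ∑ k, (∏ j ∈ Finset.univ.erase r', (w k - 1 - u j)) /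
        ((∏ j ∈ Finset.univ.erase k, (w k - w j)) * (1 + u s' - w k)) = 0 :=
  simplification_one_general m w hw u r' s' hrs hws
end

section
/- Let m ≥ 1, let w₁, …, w_m ∈ ℂ be pairwise distinct, let u₁, …, u_{m+1} ∈ ℂ, and let r' ∈ {1, …, m+1}. Assume u_{r'} ≠ w_k for every 1 ≤ k ≤ m. Then 1 + ∑_{k=1}^{m} [ ∏_{1 ≤ j ≤ m+1, j ≠ r'} (w_k − 1 − u_j) ] / [ ∏_{1 ≤ j ≤ m, j ≠ k} (w_k − w_j) · (u_{r'} − w_k) ] = [ ∏_{1 ≤ j ≤ m+1, j ≠ r'} (u_{r'} − 1 − u_j) ] / [ ∏_{k=1}^{m} (u_{r'} − w_k) ]. -/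
open Finset Polynomial

namespace Lagrange

variable {F ι : Type*} [Field F] [DecidableEq ι] {s : Finset ι} {v : ι → F}

/-- Partial fractions for `Q / nodal s v`: since `Q - nodal s v` has degree `< #s`, it is its own
Lagrange interpolant at the nodes, where it takes the values of `Q`. -/
theorem eval_div_eval_nodal_eq_one_add_sum (hvs : Set.InjOn v s) {Q : F[X]} (hQ : Q.Monic)
    (hdeg : Q.degree = #s) {x : F} (hx : ∀ i ∈ s, x ≠ v i) :
    Q.eval x / (nodal s v).eval x =
      1 + ∑ i ∈ s, nodalWeight s v i * (x - v i)⁻¹ * Q.eval (v i) := by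
  have hdeg_sub : (Q - nodal s v).degree < #s := by
    rw [← degree_nodal (v := v)]
    exact degree_sub_lt_right (hdeg.trans degree_nodal.symm) nodal_ne_zero
      (by rw [hQ.leadingCoeff, nodal_monic.leadingCoeff])
  have hinterp : Q - nodal s v = interpolate s v fun i => Q.eval (v i) :=
    eq_interpolate_of_eval_eq _ hvs hdeg_sub fun i hi => by
      rw [eval_sub, eval_nodal_at_node hi, sub_zero]
  have hsub := congrArg (eval x) hinterp
  rw [eval_sub, eval_interpolate_not_at_node _ hx, sub_eq_iff_eq_add'] at hsub
  rw [hsub, add_div, div_self (eval_nodal_not_at_node hx), mul_div_cancel_left₀ _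
    (eval_nodal_not_at_node hx)]

end Lagrange

theorem simplification_two_general (m : ℕ)
    (w : Fin m → ℂ) (hw : Function.Injective w)
    (u : Fin (m + 1) → ℂ) (r' : Fin (m + 1))
    (hur : ∀ k, u r' ≠ w k) :
    1 + ∑ k, (∏ j ∈ Finset.univ.erase r', (w k - 1 - u j)) /
        ((∏ j ∈ Finset.univ.erase k, (w k - w j)) * (u r' - w k)) =
      (∏ j ∈ Finset.univ.erase r', (u r' - 1 - u j)) / ∏ k, (u r' - w k) := by
  have hdeg : (Lagrange.nodal (univ.erase r') (1 + u)).degree = #(univ : Finset (Fin m)) := by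
    simp [Lagrange.degree_nodal, card_erase_of_mem]
  have hpartial := Lagrange.eval_div_eval_nodal_eq_one_add_sum hw.injOn Lagrange.nodal_monic hdeg
    fun k _ => hur k
  simp only [Lagrange.eval_nodal, Lagrange.nodalWeight, Pi.add_apply, Pi.one_apply,
    sub_add_eq_sub_sub, prod_inv_distrib] at hpartial
  rw [hpartial]
  congr 1
  exact sum_congr rfl fun k _ => by rw [div_eq_mul_inv, mul_inv, mul_comm]

/-- Simplification identity (2): for pairwise distinct `w₁,…,w_m`, any `u₁,…,u_{m+1}`,
an index `r'` in `{1,…,m+1}`, and `u_{r'} ≠ w_k` for all `k`,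
`1 + ∑_k ∏_{j≠r'}(w_k − 1 − u_j) / ( ∏_{j≠k}(w_k − w_j) · (u_{r'} − w_k) )
  = ∏_{j≠r'}(u_{r'} − 1 − u_j) / ∏_k (u_{r'} − w_k)`. -/
theorem simplification_two (m : ℕ) (hm : 1 ≤ m)
    (w : Fin m → ℂ) (hw : Function.Injective w)
    (u : Fin (m + 1) → ℂ) (r' : Fin (m + 1))
    (hur : ∀ k, u r' ≠ w k) :
    1 + ∑ k, (∏ j ∈ Finset.univ.erase r', (w k - 1 - u j)) /
        ((∏ j ∈ Finset.univ.erase k, (w k - w j)) * (u r' - w k)) =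
      (∏ j ∈ Finset.univ.erase r', (u r' - 1 - u j)) / ∏ k, (u r' - w k) :=
  simplification_two_general m w hw u r' hur
end

section
/- Let m₋, m, m₊ ∈ ℕ with m ≥ 1; let b₁,…,b_{m₋} ∈ ℂ, let c₁,…,c_m ∈ ℂ be pairwise distinct, let d₁,…,d_{m₊} ∈ ℂ; fix indices r ∈ {1,…,m} and r₊, s₊ ∈ {1,…,m₊}, set δ := 1 if r₊ = s₊ and δ := 0 otherwise, and let Z ∈ ℂ[z] be any polynomial. Define P₋(z) := ∏_{j=1}^{m₋}(z−b_j), P_r(z) := ∏_{k≠r}(z−c_k), P(z) := ∏_{k=1}^m(z−c_k), P₊(z) := ∏_{t≠r₊}(z−d_t), and the rational functions Q₁(z) := P₊(z)·Z(z)·P(d_{s₊}−1+δ) / ( P_r(z−1)·(z−c_r−1)·(z−d_{s₊}−δ) ) and Q₂(z) := [ P₊(c_r+1)·P₋(c_r)·P_r(d_{s₊}−1+δ)·Z(c_r+1) / ( P_r(c_r)·P_r(c_r+1) ) ] · P_r(z) / ( P₋(z−1)·(z−c_r−1) ). Assume c_r + 1 ≠ d_{s₊} + δ, c_r ∉ {b₁,…,b_{m₋}},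 and c_r + 1 ∉ {c_k : k ≠ r}. Then Res_{z = c_r+1} Q₁ + Res_{z = c_r+1} Q₂ = 0, i.e. lim_{z → c_r+1} (z − c_r − 1)·( Q₁(z) + Q₂(z) ) = 0; equivalently, the sum Q₁ + Q₂ is regular at z = c_r + 1. -/
open Finset Filter Polynomial

noncomputable section

/-! Both terms have at most a simple pole at `a = c r + 1`, so `(z - a) (Q₁ + Q₂)` extends
continuously to `a`, with value the sum of the two residues. In the residue of `Q₁` the factor
`P (d_{s₊} - 1 + δ)` contains `d_{s₊} - 1 + δ - c_r = -(a - d_{s₊} - δ)`, which cancels the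
remaining denominator factor; what is left is exactly the negative of the residue of `Q₂`. -/

open Topology

section SimplePole

variable {𝕜 : Type*} [NontriviallyNormedField 𝕜] {a : 𝕜}

theorem tendsto_sub_mul_div_sub_nhdsNE {f : 𝕜 → 𝕜} (hf : ContinuousAt f a) :
    Tendsto (fun z => (z - a) * (f z / (z - a))) (𝓝[≠] a) (𝓝 (f a)) := by
  refine hf.continuousWithinAt.tendsto.congr' ?_
  filter_upwards [self_mem_nhdsWithin] with z hz
  exact (mul_div_cancel₀ _ (sub_ne_zero.2 hz)).symm

theorem tendsto_sub_mul_add_of_residues_cancel {p u q v : 𝕜 → 𝕜}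
    (hp : ContinuousAt p a) (hu : ContinuousAt u a) (hq : ContinuousAt q a)
    (hv : ContinuousAt v a) (hua : u a ≠ 0) (hva : v a ≠ 0)
    (hres : p a / u a + q a / v a = 0) :
    Tendsto (fun z => (z - a) * (p z / (u z * (z - a)) + q z / (v z * (z - a))))
      (𝓝[≠] a) (𝓝 0) := by
  simp only [← div_div, ← add_div]
  exact hres ▸ tendsto_sub_mul_div_sub_nhdsNE ((hp.div hu hua).add (hq.div hv hva))

end SimplePole

theorem residue_cancellation_general (mminus mm mplus : ℕ)
    (b : Fin mminus → ℂ) (c : Fin mm → ℂ) (hc : Function.Injective c)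
    (d : Fin mplus → ℂ) (r : Fin mm) (rp sp : Fin mplus) (Z : Polynomial ℂ)
    (h1 : c r + 1 ≠ d sp + (if rp = sp then (1 : ℂ) else 0))
    (h2 : ∀ j, c r ≠ b j)
    (h3 : ∀ k, k ≠ r → c r + 1 ≠ c k) :
    Filter.Tendsto (fun z : ℂ =>
        (z - c r - 1) *
          ((∏ t ∈ Finset.univ.erase rp, (z - d t)) * Z.eval z *
              (∏ k, (d sp - 1 + (if rp = sp then (1 : ℂ) else 0) - c k)) /
              ((∏ k ∈ Finset.univ.erase r, (z - 1 - c k)) * (z - c r - 1) *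
                (z - d sp - (if rp = sp then (1 : ℂ) else 0))) +
            (∏ t ∈ Finset.univ.erase rp, (c r + 1 - d t)) * (∏ j, (c r - b j)) *
                (∏ k ∈ Finset.univ.erase r, (d sp - 1 + (if rp = sp then (1 : ℂ) else 0) - c k)) *
                Z.eval (c r + 1) /
                ((∏ k ∈ Finset.univ.erase r, (c r - c k)) *
                  (∏ k ∈ Finset.univ.erase r, (c r + 1 - c k))) *
                (∏ k ∈ Finset.univ.erase r, (z - c k)) /
              ((∏ j, (z - 1 - b j)) * (z - c r - 1))))
      (nhdsWithin (c r + 1) {c r + 1}ᶜ) (nhds 0) := by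
  set δ : ℂ := if rp = sp then 1 else 0
  have hPr : ∏ k ∈ univ.erase r, (c r - c k) ≠ 0 :=
    prod_ne_zero_iff.2 fun k hk => sub_ne_zero.2 (hc.ne (ne_of_mem_erase hk).symm)
  have hPra : ∏ k ∈ univ.erase r, (c r + 1 - c k) ≠ 0 :=
    prod_ne_zero_iff.2 fun k hk => sub_ne_zero.2 (h3 k (ne_of_mem_erase hk))
  have hPm : ∏ j, (c r - b j) ≠ 0 := prod_ne_zero_iff.2 fun j _ => sub_ne_zero.2 (h2 j)
  have hpole : c r + 1 - d sp - δ ≠ 0 := by rw [sub_sub]; exact sub_ne_zero.2 h1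
  have hP : ∏ k, (d sp - 1 + δ - c k) =
      -(c r + 1 - d sp - δ) * ∏ k ∈ univ.erase r, (d sp - 1 + δ - c k) := by
    rw [← mul_prod_erase univ _ (mem_univ r)]; ring
  -- put the pole factor `z - (c r + 1)` last in both denominators
  simp only [sub_sub _ (c r) 1]
  simp only [mul_right_comm _ (_ - (c r + 1))]
  refine tendsto_sub_mul_add_of_residues_cancel ?_ (by fun_prop) (by fun_prop) (by fun_prop)
    ?_ ?_ ?_
  · have := Z.continuous; fun_prop
  all_goals simp only [add_sub_cancel_right]
  · exact mul_ne_zero hPr hpole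
  · exact hPm
  · rw [hP]; field_simp; ring

/-- The residue-cancellation lemma underlying the polynomiality of the rational Lax
matrices. With `P₋(z) = ∏_j (z−b_j)`, `P(z) = ∏_k (z−c_k)`, `P_r(z) = ∏_{k≠r} (z−c_k)`,
`P₊(z) = ∏_{t≠r₊} (z−d_t)`, `δ = [r₊ = s₊]`, and
`Q₁(z) = P₊(z)·Z(z)·P(d_{s₊}−1+δ) / ( P_r(z−1)·(z−c_r−1)·(z−d_{s₊}−δ) )`,
`Q₂(z) = [ P₊(c_r+1)·P₋(c_r)·P_r(d_{s₊}−1+δ)·Z(c_r+1) / ( P_r(c_r)·P_r(c_r+1) ) ]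
          · P_r(z) / ( P₋(z−1)·(z−c_r−1) )`,
the sum of the residues of `Q₁` and `Q₂` at `z = c_r + 1` vanishes:
`lim_{z → c_r+1} (z − c_r − 1)·(Q₁(z) + Q₂(z)) = 0`. -/
theorem residue_cancellation (mminus mm mplus : ℕ) (hm : 1 ≤ mm)
    (b : Fin mminus → ℂ) (c : Fin mm → ℂ) (hc : Function.Injective c)
    (d : Fin mplus → ℂ) (r : Fin mm) (rp sp : Fin mplus) (Z : Polynomial ℂ)
    (h1 : c r + 1 ≠ d sp + (if rp = sp then (1 : ℂ) else 0))
    (h2 : ∀ j, c r ≠ b j)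
    (h3 : ∀ k, k ≠ r → c r + 1 ≠ c k) :
    Filter.Tendsto (fun z : ℂ =>
        (z - c r - 1) *
          ((∏ t ∈ Finset.univ.erase rp, (z - d t)) * Z.eval z *
              (∏ k, (d sp - 1 + (if rp = sp then (1 : ℂ) else 0) - c k)) /
              ((∏ k ∈ Finset.univ.erase r, (z - 1 - c k)) * (z - c r - 1) *
                (z - d sp - (if rp = sp then (1 : ℂ) else 0))) +
            (∏ t ∈ Finset.univ.erase rp, (c r + 1 - d t)) * (∏ j, (c r - b j)) *
                (∏ k ∈ Finset.univ.erase r, (d sp - 1 + (if rp = sp then (1 : ℂ) else 0) - c k)) *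
                Z.eval (c r + 1) /
                ((∏ k ∈ Finset.univ.erase r, (c r - c k)) *
                  (∏ k ∈ Finset.univ.erase r, (c r + 1 - c k))) *
                (∏ k ∈ Finset.univ.erase r, (z - c k)) /
              ((∏ j, (z - 1 - b j)) * (z - c r - 1))))
      (nhdsWithin (c r + 1) {c r + 1}ᶜ) (nhds 0) :=
  residue_cancellation_general mminus mm mplus b c hc d r rp sp Z h1 h2 h3
end
end
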